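/- Let N be a nonnegative integer, η ∈ ℂ, and a = (a₁,a₂,a₃,a₄) ∈ ℂ⁴ with a₁+a₂+a₃+a₄ = 0. Then as operators on Θ_N, σ ∘ Δ(a) ∘ σ = e^{2πi(a₁+a₃+τ/2)} · Δ(a₁+1/2+τ/2, a₂+1/2−τ/2, a₃−1/2+τ/2, a₄−1/2−τ/2). -/

import Mathlib

noncomputable section
open Complex MeasureTheory

def cπ : ℂ := Real.pi

/-- Jacobi's first theta function θ₁(x|τ). -/
def θf (τ x : ℂ) : ℂ :=
  I * ∑' n : ℤ, (-1 : ℂ) ^ n *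
    Complex.exp (cπ * I * τ * ((n : ℂ) - 1/2)^2 + cπ * I * (2*(n : ℂ) - 1) * x)

/-- The space Θ_N of even theta functions of order 2N. -/
def ThetaSp (τ : ℂ) (N : ℕ) (f : ℂ → ℂ) : Prop :=
  Differentiable ℂ f ∧ (∀ x, f (x + 1) = f x) ∧
  (∀ x, f (x + τ) = Complex.exp (-2*cπ*I*N*(2*x + τ)) * f x) ∧
  (∀ x, f (-x) = f x)

/-- Sklyanin's weight function M(u,v). -/
def Mw (τ η : ℂ) (N : ℕ) (u v : ℂ) : ℂ :=
  θf τ (2*u) * θf τ (2*v) /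
    (Complex.exp (2*cπ*I*u*(N+2)) *
      ∏ k ∈ Finset.range (N+2),
        (θf τ (u + v + (2*(k:ℂ) - N - 1)*η + 1/2 + τ/2) *
         θf τ (u - v + (2*(k:ℂ) - N - 1)*η + 1/2 + τ/2)))

/-- Sklyanin's invariant pairing, with τ = t * I. -/
def pairing (τ η : ℂ) (t : ℝ) (N : ℕ) (f g : ℂ → ℂ) : ℂ :=
  ∫ y in (0:ℝ)..t, ∫ x in (0:ℝ)..(1:ℝ),
    f (x + y*I) * (starRingEnd ℂ) (g (x + y*I)) *
      Mw τ η N (x + y*I) ((starRingEnd ℂ) (x + y*I))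

/-- The numerator defining the difference operator Δ(a). -/
def ΔRHS (τ η : ℂ) (N : ℕ) (a₁ a₂ a₃ a₄ : ℂ) (f : ℂ → ℂ) (x : ℂ) : ℂ :=
  θf τ (x + a₁ - N*η/2) * θf τ (x + a₂ - N*η/2) * θf τ (x + a₃ - N*η/2) *
    θf τ (x + a₄ - N*η/2) * f (x + η)
  - θf τ (x - a₁ + N*η/2) * θf τ (x - a₂ + N*η/2) * θf τ (x - a₃ + N*η/2) *
    θf τ (x - a₄ + N*η/2) * f (x - η)

/-- The involution σ on Θ_N. -/
def σop (τ : ℂ) (N : ℕ) (f : ℂ → ℂ) (x : ℂ) : ℂ :=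
  Complex.exp (2*cπ*I*N*(1/4 + τ/4 + x)) * f (x + 1/2 + τ/2)

/-- q-Pochhammer infinite product (a;p)_∞. -/
def qPoch (a p : ℂ) : ℂ := ∏' j : ℕ, (1 - a * p^j)

/-- The constant C of Theorem 3.2. -/
def Cconst (τ η : ℂ) (N : ℕ) : ℂ :=
  2*η * Complex.exp (2*cπ*I*τ*(3/8)) /
    (θf τ (2*(N+1)*η) *
      (qPoch (Complex.exp (2*cπ*I*τ)) (Complex.exp (2*cπ*I*τ)))^3)

/-- The kernel K(u,w). -/
def Kk (τ η : ℂ) (N : ℕ) (u w : ℂ) : ℂ :=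
  Complex.exp (2*cπ*I*u*(N:ℂ)) *
  ∏ k ∈ Finset.range N,
    (θf τ (u + w + (2*(k:ℂ) - N + 1)*η + 1/2 + τ/2) *
     θf τ (u - w + (2*(k:ℂ) - N + 1)*η + 1/2 + τ/2))

/-- The basis functions e_k^N(x;a,b). -/
def ekN (τ η : ℂ) (N k : ℕ) (a b : ℂ) (x : ℂ) : ℂ :=
  (∏ j ∈ Finset.range k, (θf τ (a + x + 2*(j:ℂ)*η) * θf τ (a - x + 2*(j:ℂ)*η))) *
  (∏ j ∈ Finset.range (N - k), (θf τ (b + x + 2*(j:ℂ)*η) * θf τ (b - x + 2*(j:ℂ)*η)))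

/-- Elliptic number [x] = θ(2ηx). -/
def ell (τ η x : ℂ) : ℂ := θf τ (2*η*x)

/-- Elliptic shifted factorial [x]_k. -/
def ellFac (τ η x : ℂ) (k : ℕ) : ℂ := ∏ j ∈ Finset.range k, ell τ η (x + j)

/-!
Translating `x` by the half period `1/2 + τ/2` turns each factor `θ(x ± aᵢ ∓ Nη/2)` of `Δ(a)`
into the corresponding factor for the shifted parameters, up to a sign and an exponential, by the
quasi-periodicity of `θ`. Together with the exponentials produced by `σ` and by `θ(2x)`, these
combine (using `a₁ + a₂ + a₃ + a₄ = 0`) into the constant `e^{2πi(a₁+a₃+τ/2)}`. This proves the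
identity multiplied by `θ(2x)`; since `θ(2x)` is entire and not identically zero, its zeros are
isolated and continuity removes the factor.
-/

open Filter Topology

lemma θf_eq_jacobiTheta₂ (τ x : ℂ) :
    θf τ x = I * (Complex.exp (cπ*I*τ/4 - cπ*I*x) * jacobiTheta₂ (x + 1/2 - τ/2) τ) := by
  rw [θf, jacobiTheta₂, ← tsum_mul_left (f := fun n : ℤ => jacobiTheta₂_term n (x + 1/2 - τ/2) τ)]
  congr 1
  refine tsum_congr fun n => ?_
  rw [jacobiTheta₂_term, ← Complex.exp_pi_mul_I, ← Complex.exp_int_mul, ← Complex.exp_add,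
    ← Complex.exp_add]
  congr 1
  simp only [cπ]
  ring

lemma θf_add_one (τ x : ℂ) : θf τ (x + 1) = -θf τ x := by
  have h : Complex.exp (cπ*I*τ/4 - cπ*I*(x + 1)) = -Complex.exp (cπ*I*τ/4 - cπ*I*x) := by
    rw [← Complex.exp_sub_pi_mul_I]
    congr 1
    simp only [cπ]
    ring
  rw [θf_eq_jacobiTheta₂, θf_eq_jacobiTheta₂, show x + 1 + 1/2 - τ/2 = (x + 1/2 - τ/2) + 1 by ring,
    jacobiTheta₂_add_left, h]
  ring

lemma θf_add_tau (τ x : ℂ) :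
    θf τ (x + τ) = -Complex.exp (-(cπ*I*τ) - 2*cπ*I*x) * θf τ x := by
  have h : Complex.exp (cπ*I*τ/4 - cπ*I*(x + τ)) *
      Complex.exp (-(Real.pi : ℂ)*I*(τ + 2*(x + 1/2 - τ/2))) =
      -(Complex.exp (-(cπ*I*τ) - 2*cπ*I*x) * Complex.exp (cπ*I*τ/4 - cπ*I*x)) := by
    rw [← Complex.exp_add, ← Complex.exp_add, ← Complex.exp_sub_pi_mul_I]
    congr 1
    simp only [cπ]
    ring
  rw [θf_eq_jacobiTheta₂, θf_eq_jacobiTheta₂, show x + τ + 1/2 - τ/2 = (x + 1/2 - τ/2) + τ by ring,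
    jacobiTheta₂_add_left']
  linear_combination (I * jacobiTheta₂ (x + 1/2 - τ/2) τ) * h

lemma θf_add_one_add_tau (τ x : ℂ) :
    θf τ (x + 1 + τ) = Complex.exp (-(cπ*I*τ) - 2*cπ*I*x) * θf τ x := by
  have h : Complex.exp (-(cπ*I*τ) - 2*cπ*I*(x + 1)) = Complex.exp (-(cπ*I*τ) - 2*cπ*I*x) :=
    Complex.exp_eq_exp_iff_exists_int.mpr ⟨-1, by simp only [cπ]; push_cast; ring⟩
  rw [θf_add_tau, θf_add_one, h]
  ring

lemma differentiable_θf {τ : ℂ} (hτ : 0 < τ.im) : Differentiable ℂ (θf τ) := by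
  have hθ : θf τ = fun x => I * (Complex.exp (cπ*I*τ/4 - cπ*I*x) *
      jacobiTheta₂ (x + 1/2 - τ/2) τ) := funext (θf_eq_jacobiTheta₂ τ)
  have hJ : Differentiable ℂ fun x : ℂ => jacobiTheta₂ (x + 1/2 - τ/2) τ := fun x =>
    (differentiableAt_jacobiTheta₂_fst _ hτ).comp x (by fun_prop)
  rw [hθ]
  fun_prop

lemma jacobiTheta₂_half_mul_I_ne_zero {t : ℝ} (ht : 0 < t) :
    jacobiTheta₂ (t * I / 2) (t * I) ≠ 0 := by
  have hterm : ∀ n : ℤ, jacobiTheta₂_term n (t * I / 2) (t * I) =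
      (Real.exp (-(Real.pi * t * (n^2 + n))) : ℂ) := by
    intro n
    rw [jacobiTheta₂_term, Complex.ofReal_exp]
    push_cast
    congr 1
    linear_combination ((Real.pi : ℂ) * t * (n^2 + n)) * Complex.I_sq
  have hsum := hasSum_jacobiTheta₂_term (t * I / 2) (by simpa using ht : 0 < (t * I).im)
  simp_rw [hterm] at hsum
  have hre := Complex.hasSum_re hsum
  simp only [Complex.ofReal_re] at hre
  have hpos := hre.summable.tsum_pos (fun n => (Real.exp_pos _).le) 0 (Real.exp_pos _)
  rw [hre.tsum_eq] at hpos
  intro h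
  simp [h] at hpos

lemma θf_mul_I_half_ne_zero {t : ℝ} (ht : 0 < t) : θf (t * I) (1/2) ≠ 0 := by
  rw [θf_eq_jacobiTheta₂, show (1/2 : ℂ) + 1/2 - t * I / 2 = -(t * I / 2) + 1 by ring,
    jacobiTheta₂_add_left, jacobiTheta₂_neg_left]
  exact mul_ne_zero I_ne_zero (mul_ne_zero (Complex.exp_ne_zero _)
    (jacobiTheta₂_half_mul_I_ne_zero ht))

lemma eq_of_mul_eq_mul_of_differentiable {g F G : ℂ → ℂ} {z₀ : ℂ} (hg : Differentiable ℂ g)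
    (hz₀ : g z₀ ≠ 0) (hF : Continuous F) (hG : Continuous G) (h : ∀ z, g z * F z = g z * G z) :
    F = G := by
  funext z
  have hne : ∀ᶠ w in 𝓝[≠] z, g w ≠ 0 := by
    have hcod := (analyticOnNhd_univ_iff_differentiable.mpr hg).preimage_zero_mem_codiscrete hz₀
    have h := disjoint_principal_right.mp (mem_codiscrete.mp hcod z)
    rw [compl_compl] at h
    exact h
  exact tendsto_nhds_unique_of_eventuallyEq (hF.continuousAt.mono_left nhdsWithin_le_nhds)
    (hG.continuousAt.mono_left nhdsWithin_le_nhds)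
    (hne.mono fun w hw => mul_left_cancel₀ hw (h w))

lemma σop_add_halfPeriod {τ : ℂ} {N : ℕ} {f : ℂ → ℂ} (hf1 : ∀ x, f (x + 1) = f x)
    (hfτ : ∀ x, f (x + τ) = Complex.exp (-2*cπ*I*N*(2*x + τ)) * f x) (x : ℂ) :
    σop τ N f (x + 1/2 + τ/2) = Complex.exp (-(2*cπ*I*N*(1/4 + τ/4 + x))) * f x := by
  rw [σop, show x + 1/2 + τ/2 + 1/2 + τ/2 = x + τ + 1 by ring, hf1, hfτ, ← mul_assoc,
    ← Complex.exp_add]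
  congr 1
  exact Complex.exp_eq_exp_iff_exists_int.mpr ⟨N, by simp only [cπ]; push_cast; ring⟩

lemma θf_prod_add_halfPeriod (τ x c a₁ a₂ a₃ a₄ : ℂ) :
    θf τ (x + 1/2 + τ/2 + a₁ - c) * θf τ (x + 1/2 + τ/2 + a₂ - c) *
      θf τ (x + 1/2 + τ/2 + a₃ - c) * θf τ (x + 1/2 + τ/2 + a₄ - c) =
    Complex.exp (-2*cπ*I*(2*(x - c) + a₂ + a₄)) *
      (θf τ (x + (a₁ + 1/2 + τ/2) - c) * θf τ (x + (a₂ + 1/2 - τ/2) - c) *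
        θf τ (x + (a₃ - 1/2 + τ/2) - c) * θf τ (x + (a₄ - 1/2 - τ/2) - c)) := by
  rw [show x + 1/2 + τ/2 + a₁ - c = x + (a₁ + 1/2 + τ/2) - c by ring,
    show x + 1/2 + τ/2 + a₂ - c = (x + (a₂ + 1/2 - τ/2) - c) + τ by ring, θf_add_tau,
    show x + 1/2 + τ/2 + a₃ - c = (x + (a₃ - 1/2 + τ/2) - c) + 1 by ring, θf_add_one,
    show x + 1/2 + τ/2 + a₄ - c = (x + (a₄ - 1/2 - τ/2) - c) + 1 + τ by ring, θf_add_one_add_tau,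
    show -2*cπ*I*(2*(x - c) + a₂ + a₄) = (-(cπ*I*τ) - 2*cπ*I*(x + (a₂ + 1/2 - τ/2) - c)) +
      (-(cπ*I*τ) - 2*cπ*I*(x + (a₄ - 1/2 - τ/2) - c)) by ring, Complex.exp_add]
  ring

lemma θf_prod_sub_add_halfPeriod (τ x c a₁ a₂ a₃ a₄ : ℂ) :
    θf τ (x + 1/2 + τ/2 - a₁ + c) * θf τ (x + 1/2 + τ/2 - a₂ + c) *
      θf τ (x + 1/2 + τ/2 - a₃ + c) * θf τ (x + 1/2 + τ/2 - a₄ + c) =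
    Complex.exp (2*cπ*I*(a₁ + a₃ - 2*(x + c))) *
      (θf τ (x - (a₁ + 1/2 + τ/2) + c) * θf τ (x - (a₂ + 1/2 - τ/2) + c) *
        θf τ (x - (a₃ - 1/2 + τ/2) + c) * θf τ (x - (a₄ - 1/2 - τ/2) + c)) := by
  rw [show x + 1/2 + τ/2 - a₁ + c = (x - (a₁ + 1/2 + τ/2) + c) + 1 + τ by ring,
    θf_add_one_add_tau,
    show x + 1/2 + τ/2 - a₂ + c = (x - (a₂ + 1/2 - τ/2) + c) + 1 by ring, θf_add_one,
    show x + 1/2 + τ/2 - a₃ + c = (x - (a₃ - 1/2 + τ/2) + c) + τ by ring, θf_add_tau,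
    show x + 1/2 + τ/2 - a₄ + c = x - (a₄ - 1/2 - τ/2) + c by ring,
    show 2*cπ*I*(a₁ + a₃ - 2*(x + c)) = (-(cπ*I*τ) - 2*cπ*I*(x - (a₁ + 1/2 + τ/2) + c)) +
      (-(cπ*I*τ) - 2*cπ*I*(x - (a₃ - 1/2 + τ/2) + c)) by ring, Complex.exp_add]
  ring

lemma ΔRHS_σop_add_halfPeriod {τ η : ℂ} {N : ℕ} {a₁ a₂ a₃ a₄ : ℂ}
    (ha : a₁ + a₂ + a₃ + a₄ = 0) {f : ℂ → ℂ} (hf1 : ∀ x, f (x + 1) = f x)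
    (hfτ : ∀ x, f (x + τ) = Complex.exp (-2*cπ*I*N*(2*x + τ)) * f x) (x : ℂ) :
    Complex.exp (2*cπ*I*N*(1/4 + τ/4 + x)) *
        ΔRHS τ η N a₁ a₂ a₃ a₄ (σop τ N f) (x + 1/2 + τ/2) =
      Complex.exp (2*cπ*I*(a₁ + a₃ - 2*x)) *
        ΔRHS τ η N (a₁ + 1/2 + τ/2) (a₂ + 1/2 - τ/2) (a₃ - 1/2 + τ/2) (a₄ - 1/2 - τ/2) f x := by
  have hplus : Complex.exp (2*cπ*I*N*(1/4 + τ/4 + x)) *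
      Complex.exp (-2*cπ*I*(2*(x - N*η/2) + a₂ + a₄)) *
      Complex.exp (-(2*cπ*I*N*(1/4 + τ/4 + (x + η)))) = Complex.exp (2*cπ*I*(a₁ + a₃ - 2*x)) := by
    rw [← Complex.exp_add, ← Complex.exp_add]
    congr 1
    linear_combination (-2*cπ*I) * ha
  have hminus : Complex.exp (2*cπ*I*N*(1/4 + τ/4 + x)) *
      Complex.exp (2*cπ*I*(a₁ + a₃ - 2*(x + N*η/2))) *
      Complex.exp (-(2*cπ*I*N*(1/4 + τ/4 + (x - η)))) = Complex.exp (2*cπ*I*(a₁ + a₃ - 2*x)) := by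
    rw [← Complex.exp_add, ← Complex.exp_add]
    congr 1
    ring
  simp only [ΔRHS]
  rw [θf_prod_add_halfPeriod, θf_prod_sub_add_halfPeriod,
    show x + 1/2 + τ/2 + η = (x + η) + 1/2 + τ/2 by ring, σop_add_halfPeriod hf1 hfτ,
    show x + 1/2 + τ/2 - η = (x - η) + 1/2 + τ/2 by ring, σop_add_halfPeriod hf1 hfτ,
    mul_sub (Complex.exp (2*cπ*I*N*(1/4 + τ/4 + x))),
    mul_sub (Complex.exp (2*cπ*I*(a₁ + a₃ - 2*x)))]
  congr 1
  · rw [← hplus]; ring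
  · rw [← hminus]; ring

lemma θf_two_mul_mul_σop_eq {τ η : ℂ} {N : ℕ} {a₁ a₂ a₃ a₄ : ℂ}
    (ha : a₁ + a₂ + a₃ + a₄ = 0) {f : ℂ → ℂ} (hf1 : ∀ x, f (x + 1) = f x)
    (hfτ : ∀ x, f (x + τ) = Complex.exp (-2*cπ*I*N*(2*x + τ)) * f x) {Df Db : ℂ → ℂ}
    (hDfEq : ∀ x, θf τ (2*x) * Df x = ΔRHS τ η N a₁ a₂ a₃ a₄ (σop τ N f) x)
    (hDbEq : ∀ x, θf τ (2*x) * Db x =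
      ΔRHS τ η N (a₁ + 1/2 + τ/2) (a₂ + 1/2 - τ/2) (a₃ - 1/2 + τ/2) (a₄ - 1/2 - τ/2) f x)
    (x : ℂ) :
    θf τ (2*x) * σop τ N Df x = θf τ (2*x) * (Complex.exp (2*cπ*I*(a₁ + a₃ + τ/2)) * Db x) := by
  set E := Complex.exp (-(cπ*I*τ) - 2*cπ*I*(2*x))
  have hθ : θf τ (2*(x + 1/2 + τ/2)) = E * θf τ (2*x) := by
    rw [show 2*(x + 1/2 + τ/2) = 2*x + 1 + τ by ring, θf_add_one_add_tau]
  have hexp : Complex.exp (2*cπ*I*(a₁ + a₃ - 2*x)) =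
      E * Complex.exp (2*cπ*I*(a₁ + a₃ + τ/2)) := by
    rw [← Complex.exp_add]
    congr 1
    ring
  apply mul_left_cancel₀ (Complex.exp_ne_zero _ : E ≠ 0)
  calc E * (θf τ (2*x) * σop τ N Df x)
      = Complex.exp (2*cπ*I*N*(1/4 + τ/4 + x)) *
          (θf τ (2*(x + 1/2 + τ/2)) * Df (x + 1/2 + τ/2)) := by
        rw [hθ, σop]; ring
    _ = Complex.exp (2*cπ*I*(a₁ + a₃ - 2*x)) *
        ΔRHS τ η N (a₁ + 1/2 + τ/2) (a₂ + 1/2 - τ/2) (a₃ - 1/2 + τ/2) (a₄ - 1/2 - τ/2) f x := by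
        rw [hDfEq, ΔRHS_σop_add_halfPeriod ha hf1 hfτ]
    _ = E * (θf τ (2*x) * (Complex.exp (2*cπ*I*(a₁ + a₃ + τ/2)) * Db x)) := by
        rw [← hDbEq, hexp]; ring

/-- As operators on Θ_N,
σ∘Δ(a)∘σ = e^{2πi(a₁+a₃+τ/2)}·Δ(a₁+1/2+τ/2, a₂+1/2−τ/2, a₃−1/2+τ/2, a₄−1/2−τ/2). -/
theorem sigma_delta_sigma
    (t : ℝ) (ht : 0 < t) (τ : ℂ) (hτ : τ = t * I)
    (N : ℕ) (η : ℂ) (a₁ a₂ a₃ a₄ : ℂ) (ha : a₁ + a₂ + a₃ + a₄ = 0)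
    (f : ℂ → ℂ) (hf : ThetaSp τ N f)
    (Df : ℂ → ℂ) (hDf : Differentiable ℂ Df)
    (hDfEq : ∀ x, θf τ (2*x) * Df x = ΔRHS τ η N a₁ a₂ a₃ a₄ (σop τ N f) x)
    (Db : ℂ → ℂ) (hDb : Differentiable ℂ Db)
    (hDbEq : ∀ x, θf τ (2*x) * Db x =
      ΔRHS τ η N (a₁ + 1/2 + τ/2) (a₂ + 1/2 - τ/2) (a₃ - 1/2 + τ/2)
        (a₄ - 1/2 - τ/2) f x) :
    ∀ x, σop τ N Df x = Complex.exp (2*cπ*I*(a₁ + a₃ + τ/2)) * Db x := by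
  subst hτ
  have hθ : Differentiable ℂ fun x : ℂ => θf (t * I) (2*x) :=
    (differentiable_θf (by simpa using ht)).comp (by fun_prop)
  have hθ_quarter : θf (t * I) (2*(1/4)) ≠ 0 := by
    rw [show (2:ℂ)*(1/4) = 1/2 by norm_num]
    exact θf_mul_I_half_ne_zero ht
  have hσDf : Continuous (σop (t * I) N Df) := by
    have := hDf.continuous
    unfold σop
    fun_prop
  exact congrFun (eq_of_mul_eq_mul_of_differentiable hθ hθ_quarter hσDf
    (continuous_const.mul hDb.continuous) (θf_two_mul_mul_σop_eq ha hf.2.1 hf.2.2.1 hDfEq hDbEq))
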